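/- arXiv:1010.2358 — 4 statements merged into one kernel-verified Lean document; each statement's English description precedes it below -/
import Mathlib

section
/- Let V be a finite type, E : V → V → Prop a decidable relation, and label : V → L a labeling function. For every v : V, S_0(v) is the empty multiset, and for every i ≥ 1, S_i(v) = {[label v]} + Σ_{v' : E v v'} (S_{i−1}(v')).map (fun t => label v :: t), where the sum is multiset union over all out-neighbors v' of v. -/
/-- The set of paths of length at most `i` starting at `v` in the digraph given by
the relation `E`: nonempty lists with head `v`, consecutive entries related by `E`,
and length at most `i`. -/
def pathSet {V : Type*} (E : V → V → Prop) (v : V) (i : ℕ) : Set (List V) :=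
  {l : List V | l ≠ [] ∧ l.head? = some v ∧ l.Chain' E ∧ l.length ≤ i}

lemma pathSet_finite {V : Type*} [Fintype V] (E : V → V → Prop) (v : V) (i : ℕ) :
    (pathSet E v i).Finite :=
  (List.finite_length_le V i).subset fun _ hl => hl.2.2.2

/-- `traceMultiset E label v i` is the multiset `S_i(v)` of traces of all paths of
length at most `i` starting at `v`: each path contributes the list of labels of its
vertices (in order), with multiplicity. -/
noncomputable def traceMultiset {V L : Type*} [Fintype V] (E : V → V → Prop)
    (label : V → L) (v : V) (i : ℕ) : Multiset (List L) :=
  ((pathSet_finite E v i).toFinset.val).map (fun l => l.map label)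

lemma paths_rec {V : Type*} [Fintype V] (E : V → V → Prop) [DecidableRel E] (v : V) (i : ℕ) :
    ((pathSet_finite E v (i+1)).toFinset.val) =
      [v] ::ₘ ∑ v' ∈ Finset.univ.filter (fun v' => E v v'),
        ((pathSet_finite E v' i).toFinset.val).map (fun l => v :: l) := by
  classical
  ext t
  rw [Multiset.count_cons, Multiset.count_sum']
  have hmem : ∀ (w : V) (j : ℕ) (l : List V),
      Multiset.count l ((pathSet_finite E w j).toFinset.val)
        = if l ∈ pathSet E w j then 1 else 0 := by
    intro w j l
    rw [Multiset.count_eq_of_nodup (Finset.nodup _)]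
    simp [Set.Finite.mem_toFinset]
  match t with
  | [] =>
    rw [hmem]
    have : ∀ w : V, Multiset.count ([] : List V)
        (((pathSet_finite E w i).toFinset.val).map (fun l => v :: l)) = 0 := by
      intro w
      rw [Multiset.count_eq_zero]
      intro h
      obtain ⟨l, _, hl⟩ := Multiset.mem_map.mp h
      exact List.cons_ne_nil _ _ hl
    simp [pathSet, this]
  | a :: rest =>
    rw [hmem]
    have hcount : ∀ (w : V),
        Multiset.count (a :: rest) (((pathSet_finite E w i).toFinset.val).map (fun l => v :: l))
          = if a = v then (if rest ∈ pathSet E w i then 1 else 0) else 0 := by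
      intro w
      by_cases hav : a = v
      · rw [if_pos hav, hav, Multiset.count_map_eq_count' _ _ (fun x y h => by simpa using h), hmem]
      · rw [if_neg hav, Multiset.count_eq_zero]
        intro h
        obtain ⟨l, _, hl⟩ := Multiset.mem_map.mp h
        exact hav (List.cons_eq_cons.mp hl).1.symm
    simp only [hcount]
    by_cases hav : a = v
    · subst hav
      simp only [eq_self_iff_true, if_true]
      match rest with
      | [] =>
        simp [pathSet, List.Chain', List.isChain_singleton]
      | b :: rest' =>
        have hsum : (∑ v' ∈ Finset.univ.filter (fun v' => E a v'),
            if (b :: rest') ∈ pathSet E v' i then 1 else 0)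
            = if E a b ∧ (b :: rest') ∈ pathSet E b i then 1 else 0 := by
          rw [Finset.sum_filter, Finset.sum_eq_single b]
          · by_cases h : E a b <;> simp [h]
          · intro c _ hcb
            have hnp : (b :: rest') ∉ pathSet E c i := by
              rintro ⟨-, h2, -⟩
              exact hcb (by simpa using h2.symm)
            simp [hnp]
          · simp
        rw [hsum]
        have hne : a :: b :: rest' ≠ [a] := by simp
        rw [if_neg hne]
        simp only [pathSet, Set.mem_setOf_eq, List.Chain', List.isChain_cons_cons, List.head?_cons,
          Option.some_inj, List.length_cons]
        by_cases h1 : E a b <;> by_cases h2 : List.IsChain E (b :: rest') <;>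
          by_cases h3 : (b::rest').length ≤ i <;>
          simp [h1, h2, h3, List.isChain_cons_cons, Nat.succ_le_succ_iff]
    · simp only [if_neg hav]
      rw [if_neg (by rintro ⟨-, h2, -⟩; exact hav (by simpa using h2))]
      simp [hav]

theorem traceMultiset_recurrence {V L : Type*} [Fintype V] (E : V → V → Prop)
    [DecidableRel E] (label : V → L) (v : V) :
    traceMultiset E label v 0 = 0 ∧
      ∀ i : ℕ, 1 ≤ i →
        traceMultiset E label v i =
          {[label v]} + ∑ v' ∈ Finset.univ.filter (fun v' => E v v'),
              (traceMultiset E label v' (i - 1)).map (fun t => label v :: t) := by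
  constructor
  · have h0 : (pathSet_finite E v 0).toFinset = ∅ := by
      ext l
      simp only [Set.Finite.mem_toFinset, Finset.notMem_empty, iff_false]
      rintro ⟨h1, -, -, h4⟩
      exact h1 (List.eq_nil_of_length_eq_zero (Nat.le_zero.mp h4))
    simp [traceMultiset, h0]
  · intro i hi
    obtain ⟨j, rfl⟩ := Nat.exists_eq_add_of_le hi
    simp only [Nat.add_sub_cancel_left]
    show ((pathSet_finite E v (1 + j)).toFinset.val).map _ = _
    rw [Nat.add_comm 1 j, paths_rec, Multiset.map_cons,
      ← Multiset.singleton_add]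
    congr 1
    rw [show (Multiset.map (fun l => List.map label l) : Multiset (List V) → Multiset (List L))
        = ⇑(Multiset.mapAddMonoidHom (fun l : List V => List.map label l)) from rfl, map_sum]
    refine Finset.sum_congr rfl fun w _ => ?_
    simp [traceMultiset, Multiset.map_map, Function.comp]
end

section
/- Let S be a multiset of size N over some type, let 0 < ε ≤ 1, let 0 < δ < 1, and let x be an element with multiplicity at least ε·N in S. Suppose each of the N elements of S is sampled independently with probability p, where p ≤ 1 and p·ε·N ≥ 8·ln(1/δ). Then with probability at least 1 − δ, the number of sampled occurrences of x is at least 4·ln(1/δ) (i.e., at least C/2 where C = 8·ln(1/δ)). -/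
open MeasureTheory ProbabilityTheory

/-- If an element `x` has multiplicity at least `ε·N` in a multiset `S` of size `N`,
and each of the `N` elements of `S` is sampled independently with probability `p`
where `p·ε·N ≥ 8·ln(1/δ)`, then with probability at least `1 - δ` the number of
sampled occurrences of `x` is at least `4·ln(1/δ)`. -/
theorem frequent_element_sampled_often {α : Type*} [DecidableEq α]
    {Ω : Type*} [MeasurableSpace Ω] (μ : Measure Ω) [IsProbabilityMeasure μ]
    (N : ℕ) (S : Multiset α) (hScard : Multiset.card S = N)
    (elem : Fin N → α) (helem : (↑(List.ofFn elem) : Multiset α) = S)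
    (ε δ p : ℝ) (hε0 : 0 < ε) (hε1 : ε ≤ 1) (hδ0 : 0 < δ) (hδ1 : δ < 1)
    (hp1 : p ≤ 1) (hp : 8 * Real.log (1 / δ) ≤ p * ε * N)
    (x : α) (hx : ε * N ≤ (S.count x : ℝ))
    (X : Fin N → Ω → Bool) (hmeas : ∀ j, Measurable (X j))
    (hindep : iIndepFun X μ)
    (hX : ∀ j, μ {ω | X j ω = true} = ENNReal.ofReal p) :
    1 - ENNReal.ofReal δ ≤
      μ {ω | 4 * Real.log (1 / δ) ≤
        ((Finset.univ.filter (fun j => elem j = x ∧ X j ω = true)).card : ℝ)} := by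
  classical
  set L := Real.log (1 / δ) with hLdef
  have hL0 : 0 < L := Real.log_pos (by rw [lt_div_iff₀ hδ0]; linarith)
  have hpεN : 0 < p * ε * N := lt_of_lt_of_le (by linarith) hp
  have hN0 : 0 < (N : ℝ) := by
    rcases Nat.eq_zero_or_pos N with h | h
    · exfalso; rw [h] at hpεN; simp at hpεN
    · exact_mod_cast h
  have hp0 : 0 < p := by
    by_contra h
    push_neg at h
    nlinarith [mul_nonpos_of_nonpos_of_nonneg h (mul_pos hε0 hN0).le]
  set T : Finset (Fin N) := Finset.univ.filter (fun j => elem j = x) with hTdef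
  -- count x S equals card T
  have hcount : S.count x = T.card := by
    rw [← helem, ← Fin.univ_val_map, Multiset.count_map, hTdef]
    simp only [Finset.card, Finset.filter_val]
    congr 1
    apply Multiset.filter_congr
    intro j _
    exact eq_comm
  set m := T.card with hmdef
  have hm : ε * N ≤ (m : ℝ) := by
    have h := hx; rw [hcount] at h; exact_mod_cast h
  -- the indicator variables
  set Y : Fin N → Ω → ℝ := fun j ω => if X j ω then 1 else 0 with hYdef
  have hYmeas : ∀ j, Measurable (Y j) := fun j =>
    (Measurable.of_discrete (f := fun b : Bool => if b then (1:ℝ) else 0)).comp (hmeas j)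
  have hYindep : iIndepFun Y μ :=
    hindep.comp (fun _ b => if b then 1 else 0) (fun _ => Measurable.of_discrete)
  have hA : ∀ j, MeasurableSet {ω | X j ω = true} := fun j =>
    hmeas j (measurableSet_singleton true)
  -- mgf of each Y j
  have hmgf : ∀ j t, mgf (Y j) μ t = 1 + p * (Real.exp t - 1) := by
    intro j t
    have heq : (fun ω => Real.exp (t * Y j ω)) =
        fun ω => Set.indicator {ω | X j ω = true} (fun _ => Real.exp t - 1) ω + 1 := by
      funext ω
      by_cases h : X j ω = true
      · simp [hYdef, h, Set.indicator_of_mem, Set.mem_setOf_eq]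
      · simp [hYdef, h, Set.indicator_of_notMem, Set.mem_setOf_eq]
    rw [mgf, heq, integral_add ((integrable_const _).indicator (hA j)) (integrable_const _),
      integral_indicator_const _ (hA j), integral_const, measureReal_def, hX j,
      ENNReal.toReal_ofReal hp0.le, probReal_univ]
    simp [mul_comm]
    ring
  set t : ℝ := -Real.log 2 with htdef
  have ht : t ≤ 0 := neg_nonpos.mpr (Real.log_nonneg one_le_two)
  have het : Real.exp t = 1 / 2 := by
    rw [htdef, Real.exp_neg, Real.exp_log two_pos]
    norm_num
  -- the sum
  set Z : Ω → ℝ := ∑ j ∈ T, Y j with hZdef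
  have hZmeas : Measurable Z := by
    rw [hZdef]
    have he : (∑ j ∈ T, Y j) = fun ω => ∑ j ∈ T, Y j ω := by
      funext ω; exact Finset.sum_apply _ _ _
    rw [he]
    exact Finset.measurable_sum T (fun j _ => hYmeas j)
  have hZnonneg : ∀ ω, 0 ≤ Z ω := by
    intro ω
    rw [hZdef, Finset.sum_apply]
    exact Finset.sum_nonneg fun j _ => by rw [hYdef]; positivity
  have hint : Integrable (fun ω => Real.exp (t * Z ω)) μ := by
    refine Integrable.mono' (integrable_const 1)
      ((hZmeas.const_mul t).exp.aestronglyMeasurable) (ae_of_all _ fun ω => ?_)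
    rw [Real.norm_eq_abs, abs_of_pos (Real.exp_pos _), Real.exp_le_one_iff]
    exact mul_nonpos_of_nonpos_of_nonneg ht (hZnonneg ω)
  -- Chernoff
  have hcher := measure_le_le_exp_mul_mgf (μ := μ) (X := Z) (4 * L) ht hint
  have hprod : mgf Z μ t = (1 - p / 2) ^ m := by
    rw [hZdef, hYindep.mgf_sum hYmeas T, hmdef]
    rw [Finset.prod_congr rfl (fun j _ => hmgf j t), Finset.prod_const]
    congr 1
    rw [het]; ring
  have hbase0 : (0:ℝ) ≤ 1 - p / 2 := by linarith
  have hpow : (1 - p / 2) ^ m ≤ Real.exp (-(m * p) / 2) := by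
    calc (1 - p / 2) ^ m ≤ Real.exp (-(p / 2)) ^ m := by
          apply pow_le_pow_left₀ hbase0
          have := Real.add_one_le_exp (-(p/2))
          linarith
      _ = Real.exp (-(m * p) / 2) := by
          rw [← Real.exp_nat_mul]; congr 1; ring
  have hexp_le : Real.exp (-t * (4 * L)) * mgf Z μ t ≤ δ := by
    rw [hprod]
    calc Real.exp (-t * (4 * L)) * (1 - p / 2) ^ m
        ≤ Real.exp (-t * (4 * L)) * Real.exp (-(m * p) / 2) := by
          exact mul_le_mul_of_nonneg_left hpow (Real.exp_pos _).le
      _ = Real.exp (-t * (4 * L) + -(m * p) / 2) := (Real.exp_add _ _).symm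
      _ ≤ Real.exp (-L) := by
          apply Real.exp_le_exp.mpr
          have hmp : 8 * L ≤ (m:ℝ) * p := by nlinarith
          have hlog2 : Real.log 2 ≤ 3 / 4 := by
            have := Real.log_two_lt_d9
            linarith
          have : -t = Real.log 2 := by rw [htdef]; ring
          rw [this]
          nlinarith
      _ = δ := by
          rw [hLdef, one_div, Real.log_inv, neg_neg, Real.exp_log hδ0]
  have htail : μ {ω | Z ω ≤ 4 * L} ≤ ENNReal.ofReal δ := by
    rw [← ENNReal.ofReal_toReal (measure_ne_top μ _)]
    exact ENNReal.ofReal_le_ofReal (le_trans hcher hexp_le)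
  -- identify the count with Z
  have hZeq : ∀ ω, ((Finset.univ.filter (fun j => elem j = x ∧ X j ω = true)).card : ℝ)
      = Z ω := by
    intro ω
    rw [hZdef, Finset.sum_apply, ← Finset.filter_filter, ← hTdef,
      Finset.natCast_card_filter]
  have hset : {ω | 4 * L ≤
        ((Finset.univ.filter (fun j => elem j = x ∧ X j ω = true)).card : ℝ)}
      = {ω | 4 * L ≤ Z ω} := by
    ext ω; simp only [Set.mem_setOf_eq, hZeq ω]
  rw [hset]
  have hcompl : {ω | 4 * L ≤ Z ω}ᶜ ⊆ {ω | Z ω ≤ 4 * L} := by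
    intro ω h
    simp only [Set.mem_compl_iff, Set.mem_setOf_eq, not_le] at h
    exact h.le
  have h1 : (1:ENNReal) ≤ μ {ω | 4 * L ≤ Z ω} + μ {ω | 4 * L ≤ Z ω}ᶜ := by
    calc (1:ENNReal) = μ Set.univ := (measure_univ).symm
      _ = μ ({ω | 4 * L ≤ Z ω} ∪ {ω | 4 * L ≤ Z ω}ᶜ) := by rw [Set.union_compl_self]
      _ ≤ _ := measure_union_le _ _
  calc 1 - ENNReal.ofReal δ ≤ 1 - μ {ω | 4 * L ≤ Z ω}ᶜ :=
        tsub_le_tsub_left (le_trans (measure_mono hcompl) htail) 1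
    _ ≤ μ {ω | 4 * L ≤ Z ω} := by
        rw [tsub_le_iff_right]
        calc (1:ENNReal) ≤ _ := h1
          _ = μ {ω | 4 * L ≤ Z ω} + μ {ω | 4 * L ≤ Z ω}ᶜ := rfl
end

section
/- Let m ≥ 1, let a ≠ b be two symbols, and let L be the list (a^m ++ b^m) repeated m+1 times (so L has length 2m(m+1)). Suppose each position of L is kept independently with probability 1/2, and let L' be the sublist of kept characters (in order). Then the probability that a^m occurs as a contiguous sublist (infix) of L' is at most (2m+2)/2^m. -/
lemma flat_length {α : Type*} (m k : ℕ) (a b : α) :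
    (List.flatten (List.replicate k (List.replicate m a ++ List.replicate m b))).length
      = k * (2 * m) := by
  induction k with
  | zero => simp
  | succ k ih =>
    rw [List.replicate_succ, List.flatten_cons, List.length_append, ih]
    simp; ring

lemma flat_get {α : Type*} (m : ℕ) (a b : α) (k p : ℕ)
    (hp : p < (List.flatten (List.replicate k (List.replicate m a ++ List.replicate m b))).length) :
    (List.flatten (List.replicate k (List.replicate m a ++ List.replicate m b)))[p]
      = if p % (2 * m) < m then a else b := by
  induction k generalizing p with
  | zero => simp at hp
  | succ k ih =>
    rw [flat_length] at hp
    simp only [List.replicate_succ, List.flatten_cons]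
    have hlenP : (List.replicate m a ++ List.replicate m b).length = 2 * m := by
      simp; ring
    rcases lt_or_ge p (2 * m) with h | h
    · rw [List.getElem_append_left (by omega : p < (List.replicate m a ++ List.replicate m b).length)]
      rw [Nat.mod_eq_of_lt h]
      rcases lt_or_ge p m with h2 | h2
      · rw [List.getElem_append_left (by simpa using h2)]
        simp [h2]
      · rw [List.getElem_append_right (by simpa using h2)]
        simp [Nat.not_lt.2 h2]
    · rw [List.getElem_append_right (by omega : (List.replicate m a ++ List.replicate m b).length ≤ p)]
      simp only [hlenP]
      have hk : (k+1)*(2*m) = k*(2*m) + 2*m := by ring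
      rw [ih _ (by rw [flat_length]; omega)]
      rw [Nat.mod_eq_sub_mod h]

lemma comb {α : Type*} {m : ℕ} (hm : 1 ≤ m) {a b : α} (hab : a ≠ b) {L : List α}
    (hget : ∀ p (hp : p < L.length), L[p] = if p % (2 * m) < m then a else b)
    (f : Fin L.length → Bool)
    (h : List.replicate m a <:+: ((List.finRange L.length).filter f).map L.get) :
    (∃ k, k * (2 * m) < L.length ∧
      ∀ r < m, ∀ (hr : 2 * m * k + r < L.length), f ⟨2 * m * k + r, hr⟩ = true) ∨
    (∃ k, k * (2 * m) < L.length ∧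
      ∀ r < m, ∀ (hr : 2 * m * k + m + r < L.length), f ⟨2 * m * k + m + r, hr⟩ = false) := by
  classical
  set t := (List.finRange L.length).filter f with ht
  obtain ⟨u, v, huv⟩ := h
  set s := (t.drop u.length).take m with hs
  have hlen_t : u.length + (m + v.length) = t.length := by
    have := congrArg List.length huv
    simpa using this
  have hmap : s.map L.get = List.replicate m a := by
    rw [hs, List.map_take, List.map_drop, ← huv, List.append_assoc, List.drop_left,
      List.take_append_of_le_length (by simp), List.take_replicate]
    simp
  have hslen : s.length = m := by
    rw [hs]
    simp only [List.length_take, List.length_drop]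
    omega
  have hst : s <:+: t := (List.take_prefix _ _).isInfix.trans (List.drop_suffix _ _).isInfix
  have htp : t.Pairwise (· < ·) :=
    List.Pairwise.sublist List.filter_sublist (List.pairwise_lt_finRange _)
  have hsp : s.Pairwise (· < ·) := List.Pairwise.sublist hst.sublist htp
  have hmono : ∀ i j (hi : i < s.length) (hj : j < s.length), i < j → s[i] < s[j] :=
    fun i j hi hj hij => List.pairwise_iff_getElem.mp hsp i j hi hj hij
  have hj0 : 0 < s.length := by omega
  have hj1 : m - 1 < s.length := by omega
  have hmlt : ∀ j (hj : j < s.length), ((s[j] : Fin L.length) : ℕ) % (2 * m) < m := by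
    intro j hj
    have h1 : L.get s[j] = a := by
      have hmem : L.get s[j] ∈ s.map L.get := List.mem_map_of_mem (s.getElem_mem _)
      rw [hmap] at hmem
      exact List.eq_of_mem_replicate hmem
    have h2 := hget ((s[j] : Fin L.length) : ℕ) (s[j]).isLt
    rw [List.get_eq_getElem, h2] at h1
    by_contra hc
    rw [if_neg hc] at h1
    exact hab h1.symm
  have hfs : ∀ j (hj : j < s.length), f s[j] = true := by
    intro j hj
    have hmem : s[j] ∈ t := hst.sublist.subset (s.getElem_mem _)
    rw [ht] at hmem
    exact (List.mem_filter.mp hmem).2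
  have horder : ∀ j (hj : j < s.length), s[0]'hj0 ≤ s[j] ∧ s[j] ≤ s[m-1]'hj1 := by
    intro j hj
    constructor
    · rcases Nat.eq_zero_or_pos j with h0 | h0
      · subst h0; exact le_refl _
      · exact le_of_lt (hmono 0 j hj0 hj h0)
    · rcases eq_or_lt_of_le (by omega : j ≤ m - 1) with h0 | h0
      · subst h0; exact le_refl _
      · exact le_of_lt (hmono j (m-1) hj hj1 h0)
  obtain ⟨u', v', htuv⟩ := hst
  have hbet : ∀ p : Fin L.length, f p = true → s[0]'hj0 ≤ p → p ≤ s[m-1]'hj1 → p ∈ s := by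
    intro p hfp hp0 hp1
    have hpt : p ∈ t := by rw [ht]; exact List.mem_filter.2 ⟨List.mem_finRange p, hfp⟩
    rw [← htuv] at hpt
    have htp' : (u' ++ s ++ v').Pairwise (· < ·) := by rw [htuv]; exact htp
    have hP := List.pairwise_append.mp htp'
    have hP1 := List.pairwise_append.mp hP.1
    rcases List.mem_append.mp hpt with hmem | hmem
    · rcases List.mem_append.mp hmem with hmem2 | hmem2
      · exfalso
        have := hP1.2.2 p hmem2 (s[0]'hj0) (s.getElem_mem _)
        exact absurd hp0 (not_le.2 this)
      · exact hmem2
    · exfalso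
      have := hP.2.2 (s[m-1]'hj1) (List.mem_append.2 (Or.inr (s.getElem_mem _))) p hmem
      exact absurd hp1 (not_le.2 this)
  set k := ((s[0]'hj0 : Fin L.length) : ℕ) / (2 * m) with hk
  have hkltlen : k * (2 * m) < L.length := by
    have h1 := (s[0]'hj0).isLt
    have h2 : k * (2 * m) ≤ ((s[0]'hj0 : Fin L.length) : ℕ) := by
      rw [hk, mul_comm]; exact Nat.mul_div_le _ _
    omega
  have hdivmono : ∀ j (hj : j < s.length),
      k ≤ ((s[j] : Fin L.length) : ℕ) / (2 * m) ∧
      ((s[j] : Fin L.length) : ℕ) / (2 * m) ≤ ((s[m-1]'hj1 : Fin L.length) : ℕ) / (2 * m) := by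
    intro j hj
    obtain ⟨h1, h2⟩ := horder j hj
    exact ⟨Nat.div_le_div_right h1, Nat.div_le_div_right h2⟩
  by_cases hcase : ((s[m-1]'hj1 : Fin L.length) : ℕ) / (2 * m) = k
  · left
    refine ⟨k, hkltlen, ?_⟩
    have hval : ∀ j (hj : j < s.length),
        ((s[j] : Fin L.length) : ℕ) = 2 * m * k + ((s[j] : Fin L.length) : ℕ) % (2 * m) := by
      intro j hj
      obtain ⟨h1, h2⟩ := hdivmono j hj
      rw [hcase] at h2
      have hdq : ((s[j] : Fin L.length) : ℕ) / (2 * m) = k := le_antisymm h2 h1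
      conv_lhs => rw [← Nat.div_add_mod ((s[j] : Fin L.length) : ℕ) (2 * m)]
      rw [hdq]
    set g : Fin m → ℕ := fun j => ((s[(j : ℕ)]'(by omega) : Fin L.length) : ℕ) % (2 * m) with hg
    have ginj : Function.Injective g := by
      intro j1 j2 hgj
      have heq : ((s[(j1 : ℕ)]'(by omega) : Fin L.length) : ℕ)
          = ((s[(j2 : ℕ)]'(by omega) : Fin L.length) : ℕ) := by
        have h1 := hval (j1 : ℕ) (by omega)
        have h2 := hval (j2 : ℕ) (by omega)
        simp only [hg] at hgj
        omega
      rcases lt_trichotomy (j1 : ℕ) (j2 : ℕ) with h0 | h0 | h0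
      · exact absurd (Fin.ext heq) (ne_of_lt (hmono _ _ (by omega) (by omega) h0))
      · exact Fin.ext h0
      · exact absurd (Fin.ext heq.symm) (ne_of_lt (hmono _ _ (by omega) (by omega) h0))
    have himg : Finset.image g Finset.univ = Finset.range m := by
      apply Finset.eq_of_subset_of_card_le
      · intro x hx
        obtain ⟨j, _, hj⟩ := Finset.mem_image.mp hx
        rw [Finset.mem_range, ← hj]
        exact hmlt _ _
      · rw [Finset.card_image_of_injective _ ginj, Finset.card_univ, Fintype.card_fin,
          Finset.card_range]
    intro r hr hrlt
    have hrmem : r ∈ Finset.image g Finset.univ := by rw [himg]; exact Finset.mem_range.2 hr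
    obtain ⟨j, _, hgj⟩ := Finset.mem_image.mp hrmem
    have hpe : (⟨2 * m * k + r, hrlt⟩ : Fin L.length) = s[(j : ℕ)]'(by omega) := by
      apply Fin.ext
      simp only [hg] at hgj
      have h1 := hval (j : ℕ) (by omega)
      show 2 * m * k + r = ((s[(j : ℕ)]'(by omega) : Fin L.length) : ℕ)
      omega
    rw [hpe]
    exact hfs _ _
  · right
    refine ⟨k, hkltlen, ?_⟩
    have hk1 : k < ((s[m-1]'hj1 : Fin L.length) : ℕ) / (2 * m) :=
      lt_of_le_of_ne (hdivmono (m-1) hj1).1 (Ne.symm hcase)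
    intro r hr hrlt
    rcases Bool.eq_false_or_eq_true (f ⟨2 * m * k + m + r, hrlt⟩) with h0 | h0
    swap
    · exact h0
    exfalso
    have e0 : 2 * m * k + ((s[0]'hj0 : Fin L.length) : ℕ) % (2 * m)
        = ((s[0]'hj0 : Fin L.length) : ℕ) := by
      rw [hk]; exact Nat.div_add_mod _ _
    have r0 := hmlt 0 hj0
    have hp0 : s[0]'hj0 ≤ (⟨2 * m * k + m + r, hrlt⟩ : Fin L.length) := by
      rw [Fin.le_def]
      show ((s[0]'hj0 : Fin L.length) : ℕ) ≤ 2 * m * k + m + r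
      omega
    have hp1 : (⟨2 * m * k + m + r, hrlt⟩ : Fin L.length) ≤ s[m-1]'hj1 := by
      rw [Fin.le_def]
      have h1 : ((s[m-1]'hj1 : Fin L.length) : ℕ) / (2 * m) * (2 * m)
          ≤ ((s[m-1]'hj1 : Fin L.length) : ℕ) := Nat.div_mul_le_self _ _
      have h2 : (k + 1) * (2 * m) ≤ ((s[m-1]'hj1 : Fin L.length) : ℕ) / (2 * m) * (2 * m) :=
        Nat.mul_le_mul_right _ hk1
      have h3 : (k + 1) * (2 * m) = 2 * m * k + 2 * m := by ring
      show 2 * m * k + m + r ≤ ((s[m-1]'hj1 : Fin L.length) : ℕ)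
      omega
    have hmem := hbet _ h0 hp0 hp1
    obtain ⟨j, hj, hjp⟩ := List.mem_iff_getElem.mp hmem
    have hlt := hmlt j hj
    rw [hjp] at hlt
    have hmod : (2 * m * k + m + r) % (2 * m) = m + r := by
      rw [show 2 * m * k + m + r = (m + r) + k * (2 * m) by ring, Nat.add_mul_mod_self_right]
      exact Nat.mod_eq_of_lt (by omega)
    simp only [hmod] at hlt
    omega

open MeasureTheory ProbabilityTheory
open scoped ENNReal

lemma half_pow {Ω : Type*} [MeasurableSpace Ω] (μ : Measure Ω) [IsProbabilityMeasure μ]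
    (n m : ℕ) (X : Fin n → Ω → Bool) (hmeas : ∀ i, Measurable (X i))
    (hindep : iIndepFun X μ)
    (hX : ∀ i, μ {ω | X i ω = true} = 1 / 2)
    (g : ℕ → Fin n) (hg : Set.InjOn g (Finset.range m)) (c : Bool) :
    μ (⋂ r ∈ Finset.range m, X (g r) ⁻¹' {c}) = (1 / 2 : ℝ≥0∞) ^ m := by
  have htrue : ∀ i, μ (X i ⁻¹' {true}) = 1 / 2 := by
    intro i
    rw [← hX i]
    rfl
  have heach : ∀ i, μ (X i ⁻¹' {c}) = 1 / 2 := by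
    intro i
    cases c
    · have hc : X i ⁻¹' {false} = (X i ⁻¹' {true})ᶜ := by
        ext ω; simp
      rw [hc, measure_compl ((hmeas i) (measurableSet_singleton true)) (measure_ne_top μ _),
        measure_univ, htrue i]
      rw [one_div, ENNReal.one_sub_inv_two]
    · exact htrue i
  have h1 := hindep.measure_inter_preimage_eq_mul
    (S := (Finset.range m).image (fun r => g r))
    (sets := fun _ => ({c} : Set Bool)) (fun i _ => measurableSet_singleton c)
  rw [Finset.set_biInter_finset_image] at h1
  rw [h1, Finset.prod_image
    (by intro x hx y hy hxy; exact hg (by simpa using hx) (by simpa using hy) hxy)]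
  simp [heach]

/-- Let `L` be the list `(a^m ++ b^m)` repeated `m+1` times, with `a ≠ b`. If each
position of `L` is kept independently with probability `1/2` and `L'` is the
subsequence of kept characters (in order), then the probability that `a^m` occurs
as a contiguous sublist (infix) of `L'` is at most `(2m+2)/2^m`. -/
theorem infix_probability_le {α : Type*}
    {Ω : Type*} [MeasurableSpace Ω] (μ : Measure Ω) [IsProbabilityMeasure μ]
    (m : ℕ) (hm : 1 ≤ m) (a b : α) (hab : a ≠ b)
    (L : List α)
    (hL : L = List.flatten (List.replicate (m + 1)
      (List.replicate m a ++ List.replicate m b)))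
    (X : Fin L.length → Ω → Bool) (hmeas : ∀ i, Measurable (X i))
    (hindep : iIndepFun X μ)
    (hX : ∀ i, μ {ω | X i ω = true} = 1 / 2) :
    μ {ω | List.replicate m a <:+:
        ((List.finRange L.length).filter (fun i => X i ω)).map L.get} ≤
      ENNReal.ofReal ((2 * m + 2) / 2 ^ m) := by
  classical
  have hlen : L.length = (m + 1) * (2 * m) := by rw [hL]; exact flat_length m (m+1) a b
  have hget : ∀ p (hp : p < L.length), L[p] = if p % (2 * m) < m then a else b := by
    subst hL
    exact fun p hp => flat_get m a b (m+1) p hp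
  have hnpos : 0 < L.length := by
    rw [hlen]; exact Nat.mul_pos (by omega) (by omega)
  set e : ℕ → Fin L.length := fun j => ⟨j % L.length, Nat.mod_lt _ hnpos⟩ with he_def
  have he : ∀ j, j < L.length → ((e j : Fin L.length) : ℕ) = j := fun j hj => Nat.mod_eq_of_lt hj
  have hklt : ∀ k : ℕ, k * (2 * m) < L.length → k < m + 1 := by
    intro k hk
    rw [hlen] at hk
    by_contra hc
    push_neg at hc
    exact absurd hk (not_lt.2 (Nat.mul_le_mul_right (2*m) hc))
  have hidx : ∀ k : ℕ, k < m + 1 → ∀ d, d < 2 * m → 2 * m * k + d < L.length := by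
    intro k hk d hd
    rw [hlen]
    have h1 : 2*m*(k+1) = 2*m*k + 2*m := by ring
    have h2 : 2*m*(k+1) ≤ 2*m*(m+1) := Nat.mul_le_mul_left _ (by omega)
    have h3 : 2*m*(m+1) = (m+1)*(2*m) := by ring
    omega
  set EA : ℕ → Set Ω := fun k => ⋂ r ∈ Finset.range m, X (e (2*m*k + r)) ⁻¹' {true} with hEA
  set EB : ℕ → Set Ω := fun k => ⋂ r ∈ Finset.range m, X (e (2*m*k + m + r)) ⁻¹' {false} with hEB
  have hsub : {ω | List.replicate m a <:+:
        ((List.finRange L.length).filter (fun i => X i ω)).map L.get} ⊆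
      (⋃ k ∈ Finset.range (m+1), EA k) ∪ (⋃ k ∈ Finset.range (m+1), EB k) := by
    intro ω hω
    rcases comb hm hab hget (fun i => X i ω) hω with ⟨k, hk, hfa⟩ | ⟨k, hk, hfa⟩
    · left
      have hkm : k < m + 1 := hklt k hk
      simp only [Set.mem_iUnion, hEA, Set.mem_iInter]
      refine ⟨k, Finset.mem_range.2 hkm, ?_⟩
      intro r hr
      have hrm := Finset.mem_range.mp hr
      have hd : 2*m*k + r < L.length := hidx k hkm r (by omega)
      have hee : e (2*m*k + r) = ⟨2*m*k + r, hd⟩ := Fin.ext (he _ hd)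
      rw [hee, Set.mem_preimage, Set.mem_singleton_iff]
      exact hfa r hrm hd
    · right
      have hkm : k < m + 1 := hklt k hk
      simp only [Set.mem_iUnion, hEB, Set.mem_iInter]
      refine ⟨k, Finset.mem_range.2 hkm, ?_⟩
      intro r hr
      have hrm := Finset.mem_range.mp hr
      have hd : 2*m*k + m + r < L.length := by
        have := hidx k hkm (m + r) (by omega)
        omega
      have hee : e (2*m*k + m + r) = ⟨2*m*k + m + r, hd⟩ := Fin.ext (he _ hd)
      rw [hee, Set.mem_preimage, Set.mem_singleton_iff]
      exact hfa r hrm hd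
  have hmeasA : ∀ k ∈ Finset.range (m+1), μ (EA k) = (1/2 : ℝ≥0∞)^m := by
    intro k hk
    have hkm := Finset.mem_range.mp hk
    refine half_pow μ _ m X hmeas hindep hX _ ?_ true
    intro r1 hr1 r2 hr2 hee
    simp only [Finset.coe_range, Set.mem_Iio] at hr1 hr2
    have h1 := he (2*m*k + r1) (hidx k hkm r1 (by omega))
    have h2 := he (2*m*k + r2) (hidx k hkm r2 (by omega))
    have hee' : e (2*m*k + r1) = e (2*m*k + r2) := hee
    have h3 : 2*m*k + r1 = 2*m*k + r2 := by
      rw [← h1, ← h2]; exact congrArg (fun x : Fin L.length => (x : ℕ)) hee'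
    omega
  have hmeasB : ∀ k ∈ Finset.range (m+1), μ (EB k) = (1/2 : ℝ≥0∞)^m := by
    intro k hk
    have hkm := Finset.mem_range.mp hk
    refine half_pow μ _ m X hmeas hindep hX _ ?_ false
    intro r1 hr1 r2 hr2 hee
    simp only [Finset.coe_range, Set.mem_Iio] at hr1 hr2
    have h1 := he (2*m*k + m + r1) (by have := hidx k hkm (m + r1) (by omega); omega)
    have h2 := he (2*m*k + m + r2) (by have := hidx k hkm (m + r2) (by omega); omega)
    have hee' : e (2*m*k + m + r1) = e (2*m*k + m + r2) := hee
    have h3 : 2*m*k + m + r1 = 2*m*k + m + r2 := by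
      rw [← h1, ← h2]; exact congrArg (fun x : Fin L.length => (x : ℕ)) hee'
    omega
  have key : ENNReal.ofReal ((2 * m + 2) / 2 ^ m)
      = ((2*m+2 : ℕ) : ℝ≥0∞) * ((2:ℝ≥0∞)^m)⁻¹ := by
    rw [ENNReal.ofReal_div_of_pos (by positivity), div_eq_mul_inv]
    rw [show (2*(m:ℝ)+2) = ((2*m+2:ℕ):ℝ) by push_cast; ring, ENNReal.ofReal_natCast]
    rw [ENNReal.ofReal_pow (by norm_num : (0:ℝ) ≤ 2), ENNReal.ofReal_ofNat]
  calc μ {ω | List.replicate m a <:+: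
        ((List.finRange L.length).filter (fun i => X i ω)).map L.get}
      ≤ μ ((⋃ k ∈ Finset.range (m+1), EA k) ∪ (⋃ k ∈ Finset.range (m+1), EB k)) :=
        measure_mono hsub
    _ ≤ μ (⋃ k ∈ Finset.range (m+1), EA k) + μ (⋃ k ∈ Finset.range (m+1), EB k) :=
        measure_union_le _ _
    _ ≤ (∑ k ∈ Finset.range (m+1), μ (EA k)) + (∑ k ∈ Finset.range (m+1), μ (EB k)) :=
        add_le_add (measure_biUnion_finset_le _ _) (measure_biUnion_finset_le _ _)
    _ = ENNReal.ofReal ((2 * m + 2) / 2 ^ m) := by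
        rw [Finset.sum_congr rfl hmeasA, Finset.sum_congr rfl hmeasB, Finset.sum_const,
          Finset.card_range, nsmul_eq_mul, key, one_div, ENNReal.inv_pow]
        push_cast
        ring
end

section
/- Fix k ≥ 1 and a type α with decidable equality. Define the Misra–Gries summary with k counters of a stream s : List α as the finitely supported function f : α →₀ ℕ obtained by folding over s starting from the zero function, where processing an element x updates the current summary g as follows: if g x > 0, increment g x by 1; else if the support of g has fewer than k elements, set g x = 1; else decrease every positive value of g by 1. Then for every stream s, the final summary f has support of size at most k, and every element x whose number of occurrences in s satisfies (count of x in s)·(k+1) > s.length lies in the support of f (that is, f x > 0). -/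
/-- One step of the Misra–Gries algorithm with `k` counters: processing element `x`
with current summary `g`, increment `g x` if it is positive; otherwise start a new
counter `g x = 1` if fewer than `k` counters are in use; otherwise decrease every
positive counter by 1. -/
noncomputable def mgStep {α : Type*} [DecidableEq α] (k : ℕ) (g : α →₀ ℕ) (x : α) : α →₀ ℕ :=
  if 0 < g x then g.update x (g x + 1)
  else if g.support.card < k then g.update x 1
  else g.mapRange (fun n => n - 1) (Nat.zero_sub 1)

/-- The Misra–Gries summary with `k` counters of a stream `s`: fold `mgStep k`
over `s` starting from the zero function. -/
noncomputable def mgSummary {α : Type*} [DecidableEq α] (k : ℕ) (s : List α) : α →₀ ℕ :=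
  s.foldl (mgStep k) 0

/-- Total mass of a summary, as an integer. -/
def mgS {α : Type*} (g : α →₀ ℕ) : ℤ := g.sum fun _ n => (n : ℤ)

lemma mgS_nonneg {α : Type*} (g : α →₀ ℕ) : 0 ≤ mgS g :=
  Finset.sum_nonneg fun a _ => Int.ofNat_nonneg _

lemma mgS_update {α : Type*} [DecidableEq α] (g : α →₀ ℕ) (a : α) (c : ℕ) :
    mgS (g.update a c) = mgS g - g a + c := by
  have h := Finsupp.sum_update_add g a c (fun _ n => (n : ℤ))
    (fun _ => by simp) (fun _ _ _ => by push_cast; ring)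
  beta_reduce at h
  unfold mgS
  linarith

lemma mgS_mapRange_sub_one {α : Type*} (g : α →₀ ℕ) :
    mgS (g.mapRange (fun n => n - 1) (Nat.zero_sub 1)) = mgS g - g.support.card := by
  classical
  have hsub : (g.mapRange (fun n => n - 1) (Nat.zero_sub 1)).support ⊆ g.support :=
    Finsupp.support_mapRange
  unfold mgS Finsupp.sum
  simp only
  rw [Finset.sum_subset hsub (by
    intro x _ hx'
    have : (g.mapRange (fun n => n - 1) (Nat.zero_sub 1)) x = 0 :=
      Finsupp.notMem_support_iff.1 hx'
    simp [this])]
  have hcong : ∀ b ∈ g.support,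
      ((g.mapRange (fun n => n - 1) (Nat.zero_sub 1)) b : ℤ) = (g b : ℤ) - 1 := by
    intro b hb
    have hb1 : 1 ≤ g b := Nat.one_le_iff_ne_zero.2 (Finsupp.mem_support_iff.1 hb)
    rw [Finsupp.mapRange_apply, Nat.cast_sub hb1, Nat.cast_one]
  rw [Finset.sum_congr rfl hcong, Finset.sum_sub_distrib, Finset.sum_const,
    nsmul_eq_mul, mul_one]

lemma mgStep_invariant {α : Type*} [DecidableEq α] (k : ℕ) (hk : 1 ≤ k) (g : α →₀ ℕ)
    (a : α) (hcard : g.support.card ≤ k) :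
    (mgStep k g a).support.card ≤ k ∧
      ∀ x, ((k : ℤ) + 1) * g x - mgS g + (if x = a then (k : ℤ) + 1 else 0) - 1 ≤
        ((k : ℤ) + 1) * (mgStep k g a x) - mgS (mgStep k g a) := by
  classical
  unfold mgStep
  by_cases h1 : 0 < g a
  · rw [if_pos h1]
    have hmem : a ∈ g.support := Finsupp.mem_support_iff.2 (by omega)
    have hsupp : (g.update a (g a + 1)).support = insert a g.support :=
      Finsupp.support_update_ne_zero g a (Nat.succ_ne_zero _)
    constructor
    · rw [hsupp, Finset.insert_eq_self.2 hmem]; exact hcard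
    · intro x
      rw [mgS_update]
      rw [Finsupp.coe_update]
      by_cases hx : x = a
      · subst hx; rw [Function.update_self]; push_cast; ring_nf; omega
      · rw [Function.update_of_ne hx]; rw [if_neg hx]; push_cast; omega
  · rw [if_neg h1]
    have ha0 : g a = 0 := Nat.eq_zero_of_not_pos h1
    by_cases h2 : g.support.card < k
    · rw [if_pos h2]
      have hsupp : (g.update a 1).support = insert a g.support :=
        Finsupp.support_update_ne_zero g a one_ne_zero
      constructor
      · rw [hsupp]
        calc (insert a g.support).card ≤ g.support.card + 1 := Finset.card_insert_le _ _
          _ ≤ k := by omega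
      · intro x
        rw [mgS_update, Finsupp.coe_update]
        by_cases hx : x = a
        · subst hx; rw [Function.update_self]; push_cast; rw [ha0]; push_cast; ring_nf; omega
        · rw [Function.update_of_ne hx, if_neg hx]; push_cast; omega
    · rw [if_neg h2]
      have hcard' : g.support.card = k := le_antisymm hcard (not_lt.1 h2)
      constructor
      · exact le_trans (Finset.card_le_card Finsupp.support_mapRange) hcard
      · intro x
        rw [mgS_mapRange_sub_one, Finsupp.mapRange_apply, hcard']
        by_cases hx : x = a
        · subst hx; rw [if_pos rfl, ha0]; push_cast; omega
        · rw [if_neg hx]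
          by_cases hgx : 0 < g x
          · have : ((g x - 1 : ℕ) : ℤ) = (g x : ℤ) - 1 := by
              rw [Nat.cast_sub hgx]; simp
            rw [this]; ring_nf; omega
          · have hgx0 : g x = 0 := Nat.eq_zero_of_not_pos hgx
            rw [hgx0]
            have : (0 : ℕ) - 1 = 0 := rfl
            rw [this]
            push_cast
            have := mgS_nonneg g
            omega

lemma mgFold_invariant {α : Type*} [DecidableEq α] (k : ℕ) (hk : 1 ≤ k) :
    ∀ (s : List α) (g : α →₀ ℕ), g.support.card ≤ k →
      (s.foldl (mgStep k) g).support.card ≤ k ∧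
      ∀ x, ((k : ℤ) + 1) * g x - mgS g + (s.count x) * ((k : ℤ) + 1) - s.length ≤
        ((k : ℤ) + 1) * (s.foldl (mgStep k) g x) - mgS (s.foldl (mgStep k) g) := by
  intro s
  induction s with
  | nil => intro g hg; exact ⟨hg, fun x => by simp⟩
  | cons a s ih =>
    intro g hg
    obtain ⟨hstep, hineq⟩ := mgStep_invariant k hk g a hg
    obtain ⟨hc, hi⟩ := ih (mgStep k g a) hstep
    refine ⟨hc, fun x => ?_⟩
    have h1 := hineq x
    have h2 := hi x
    simp only [List.foldl_cons] at *
    simp only [List.count_cons, List.length_cons, beq_iff_eq]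
    by_cases hx : a = x
    · subst hx
      rw [if_pos rfl]
      rw [if_pos rfl] at h1
      push_cast
      linarith
    · rw [if_neg hx]
      have hx' : x ≠ a := fun h => hx h.symm
      rw [if_neg hx'] at h1
      push_cast
      linarith

/-- The Misra–Gries summary with `k ≥ 1` counters uses at most `k` counters, and
every element `x` with `(count of x in s)·(k+1) > s.length` has a positive counter
in the final summary. -/
theorem misraGries_correct {α : Type*} [DecidableEq α] (k : ℕ) (hk : 1 ≤ k)
    (s : List α) :
    (mgSummary k s).support.card ≤ k ∧
      ∀ x : α, s.length < s.count x * (k + 1) → 0 < mgSummary k s x := by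
  obtain ⟨hc, hi⟩ := mgFold_invariant k hk s (0 : α →₀ ℕ) (by simp)
  refine ⟨hc, fun x hx => ?_⟩
  have h := hi x
  have hS0 : mgS (0 : α →₀ ℕ) = 0 := by simp [mgS]
  rw [hS0] at h
  have hSf := mgS_nonneg (s.foldl (mgStep k) (0 : α →₀ ℕ))
  have hx' : (s.length : ℤ) < (s.count x : ℤ) * ((k : ℤ) + 1) := by exact_mod_cast hx
  by_contra hcon
  push_neg at hcon
  unfold mgSummary at hcon
  have h0 : (s.foldl (mgStep k) (0 : α →₀ ℕ)) x = 0 := Nat.le_zero.1 hcon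
  rw [h0] at h
  simp only [Finsupp.coe_zero, Pi.zero_apply, Nat.cast_zero, mul_zero, zero_sub,
    sub_zero, zero_add] at h
  linarith
end
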